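/- Under the hole-punching graph-cluster randomization design with 0 < p_t < 1 and 0 < p_hp < 1, suppose all potential outcomes are non-negative: Y_i(t) ≥ 0 for all units i and t ∈ {0,1}. Then for t1 ≠ t2 in {0,1}, the cluster-form covariance estimator Ĉov[μ̂(t1), μ̂(t2)] = (1/N²)·[ (1/(p(t1)·p(t2)) − 1/p(t1,t2))·Σ_{c∈𝒞} Ŝ_c(t1,t2) − Q̂(t1,t1)/(2·p(t1)) − Q̂(t2,t2)/(2·p(t2)) ], where Ŝ_c(t1,t2) = Σ_{i∈c: Z_i=t1} Σ_{j∈c: Z_j=t2} Y_i(t1)·Y_j(t2) and Q̂(t,t) = Σ_{i: Z_i=t} Y_i(t)², is downward biased: E[Ĉov[μ̂(t1), μ̂(t2)]] ≤ Cov[μ̂(t1), μ̂(t2)]. -/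

import Mathlib

open MeasureTheory ProbabilityTheory

/-- The Bernoulli measure on `Bool` with success probability `p`. -/
noncomputable def bernoulliMeasure (p : ℝ) : Measure Bool :=
  ENNReal.ofReal p • Measure.dirac true + ENNReal.ofReal (1 - p) • Measure.dirac false

instance bernoulliMeasure.instIsFiniteMeasure (p : ℝ) :
    IsFiniteMeasure (bernoulliMeasure p) where
  measure_univ_lt_top := by
    simp [_root_.bernoulliMeasure]

/-- The hole-punching graph-cluster randomization design measure on the product space
`(C → Bool) × (Fin N → Bool)`: i.i.d. Bernoulli(`pt`) cluster-level assignments and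
i.i.d. Bernoulli(`php`) unit-level flips, all mutually independent. -/
noncomputable def designMeasure (C : Type*) [Fintype C] (N : ℕ) (pt php : ℝ) :
    Measure ((C → Bool) × (Fin N → Bool)) :=
  (Measure.pi fun _ : C => bernoulliMeasure pt).prod
    (Measure.pi fun _ : Fin N => bernoulliMeasure php)

/-- The treatment `Z_i` of unit `i`: cluster assignment XOR individual flip. -/
def treat {C : Type*} {N : ℕ} (c : Fin N → C) (i : Fin N)
    (ω : (C → Bool) × (Fin N → Bool)) : Bool :=
  xor (ω.1 (c i)) (ω.2 i)

/-- The marginal propensity `p_i(t) = Pr(Z_i = t)`. -/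
noncomputable def margProp {C : Type*} [Fintype C] {N : ℕ} (pt php : ℝ) (c : Fin N → C)
    (i : Fin N) (t : Bool) : ℝ :=
  (designMeasure C N pt php {ω | treat c i ω = t}).toReal

/-- The joint propensity `p_{ij}(t₁,t₂) = Pr(Z_i = t₁ ∧ Z_j = t₂)`. -/
noncomputable def jointProp {C : Type*} [Fintype C] {N : ℕ} (pt php : ℝ) (c : Fin N → C)
    (i j : Fin N) (t1 t2 : Bool) : ℝ :=
  (designMeasure C N pt php {ω | treat c i ω = t1 ∧ treat c j ω = t2}).toReal

/-- The Horvitz–Thompson estimator `μ̂(t)`. -/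
noncomputable def htEst {C : Type*} [Fintype C] {N : ℕ} (pt php : ℝ) (c : Fin N → C)
    (Y : Fin N → Bool → ℝ) (t : Bool) (ω : (C → Bool) × (Fin N → Bool)) : ℝ :=
  (1 / (N : ℝ)) * ∑ i, if treat c i ω = t then Y i t / margProp pt php c i t else 0

/-- The realized within-cluster sum `Ŝ_c(t1,t2) = Σ_{i∈c: Z_i=t1} Σ_{j∈c: Z_j=t2} Y_i(t1)·Y_j(t2)`
for cluster `k`, as a function of the random assignment `ω`. -/
noncomputable def Shat {C : Type*} [DecidableEq C] {N : ℕ} (c : Fin N → C)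
    (Y : Fin N → Bool → ℝ) (t1 t2 : Bool) (k : C)
    (ω : (C → Bool) × (Fin N → Bool)) : ℝ :=
  ∑ i ∈ Finset.univ.filter (fun i => c i = k ∧ treat c i ω = t1),
    ∑ j ∈ Finset.univ.filter (fun j => c j = k ∧ treat c j ω = t2), Y i t1 * Y j t2

/-- The realized diagonal sum `Q̂(t,t) = Σ_{i: Z_i=t} Y_i(t)²`, as a function of the random
assignment `ω`. -/
noncomputable def Qhat {C : Type*} {N : ℕ} (c : Fin N → C)
    (Y : Fin N → Bool → ℝ) (t : Bool) (ω : (C → Bool) × (Fin N → Bool)) : ℝ :=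
  ∑ i ∈ Finset.univ.filter (fun i => treat c i ω = t), Y i t ^ 2

/-- The cluster-form variance estimator
`V̂ar[μ̂(t)] = (1/N²)·[(1/p(t)² − 1/p(t,t))·Σ_c Ŝ_c(t,t) + (1/p(t,t) − 1/p(t))·Q̂(t,t)]`. -/
noncomputable def varHat {C : Type*} [Fintype C] [DecidableEq C] {N : ℕ} (c : Fin N → C)
    (Y : Fin N → Bool → ℝ) (p : Bool → ℝ) (pj : Bool → Bool → ℝ) (t : Bool)
    (ω : (C → Bool) × (Fin N → Bool)) : ℝ :=
  (1 / (N : ℝ) ^ 2) *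
    ((1 / (p t) ^ 2 - 1 / pj t t) * (∑ k : C, Shat c Y t t k ω)
      + (1 / pj t t - 1 / p t) * Qhat c Y t ω)

/-- The cluster-form covariance estimator
`Ĉov[μ̂(t1),μ̂(t2)] = (1/N²)·[(1/(p(t1)·p(t2)) − 1/p(t1,t2))·Σ_c Ŝ_c(t1,t2)
− Q̂(t1,t1)/(2·p(t1)) − Q̂(t2,t2)/(2·p(t2))]`. -/
noncomputable def covHat {C : Type*} [Fintype C] [DecidableEq C] {N : ℕ} (c : Fin N → C)
    (Y : Fin N → Bool → ℝ) (p : Bool → ℝ) (pj : Bool → Bool → ℝ) (t1 t2 : Bool)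
    (ω : (C → Bool) × (Fin N → Bool)) : ℝ :=
  (1 / (N : ℝ) ^ 2) *
    ((1 / (p t1 * p t2) - 1 / pj t1 t2) * (∑ k : C, Shat c Y t1 t2 k ω)
      - Qhat c Y t1 ω / (2 * p t1) - Qhat c Y t2 ω / (2 * p t2))

/-- The covariance of two real random variables: `Cov[X,Y] = E[(X − E X)(Y − E Y)]`. -/
noncomputable def cov {Ω : Type*} [MeasurableSpace Ω] (P : Measure Ω) (X Y : Ω → ℝ) : ℝ :=
  ∫ ω, (X ω - ∫ x, X x ∂P) * (Y ω - ∫ x, Y x ∂P) ∂P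


/-!
Expand both sides over ordered pairs of units `(i, j)`, with weight `Y_i(t1) Y_j(t2)`. The true
covariance has weight `p_ij / (p_i p_j) - 1`: it vanishes across clusters, where `Z_i` and `Z_j`
are independent, and it is `-1` on the diagonal, where `p_ii(t1, t2) = 0`. In expectation the
estimator reproduces every off-diagonal weight exactly (within a cluster this needs
`p(t1, t2) > 0`, which holds because every assignment has positive probability), and replaces
the diagonal term `-Σ Y_i(t1) Y_i(t2)` by `-Σ (Y_i(t1)² + Y_i(t2)²) / 2`. So the bias is
`-(1 / 2N²) Σ_i (Y_i(t1) - Y_i(t2))² ≤ 0`.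
-/

lemma bernoulliMeasure_singleton (p : ℝ) (b : Bool) :
    bernoulliMeasure p {b} = ENNReal.ofReal (if b then p else 1 - p) := by
  cases b <;> simp [_root_.bernoulliMeasure]

lemma isProbabilityMeasure_bernoulliMeasure {p : ℝ} (h0 : 0 ≤ p) (h1 : p ≤ 1) :
    IsProbabilityMeasure (bernoulliMeasure p) := by
  constructor
  simp [_root_.bernoulliMeasure, ← ENNReal.ofReal_add h0 (sub_nonneg.2 h1)]

lemma bernoulliMeasure_singleton_pos {p : ℝ} (h0 : 0 < p) (h1 : p < 1) (b : Bool) :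
    0 < bernoulliMeasure p {b} := by
  cases b <;> simpa [bernoulliMeasure_singleton]

section Design

variable {C : Type*} [Fintype C] {N : ℕ} {pt php : ℝ}

instance : IsFiniteMeasure (designMeasure C N pt php) := by
  unfold designMeasure
  infer_instance

lemma isProbabilityMeasure_designMeasure (hpt0 : 0 ≤ pt) (hpt1 : pt ≤ 1) (hphp0 : 0 ≤ php)
    (hphp1 : php ≤ 1) : IsProbabilityMeasure (designMeasure C N pt php) := by
  have := isProbabilityMeasure_bernoulliMeasure hpt0 hpt1
  have := isProbabilityMeasure_bernoulliMeasure hphp0 hphp1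
  unfold designMeasure
  infer_instance

lemma designMeasure_singleton_pos (hpt0 : 0 < pt) (hpt1 : pt < 1) (hphp0 : 0 < php)
    (hphp1 : php < 1) (ω : (C → Bool) × (Fin N → Bool)) :
    0 < designMeasure C N pt php {ω} := by
  rw [designMeasure, ← Set.singleton_prod_singleton, Measure.prod_prod, Measure.pi_singleton,
    Measure.pi_singleton]
  refine ENNReal.mul_pos ?_ ?_ <;>
    refine (CanonicallyOrderedAdd.prod_pos.2 fun _ _ => ?_).ne'
  exacts [bernoulliMeasure_singleton_pos hpt0 hpt1 _,
    bernoulliMeasure_singleton_pos hphp0 hphp1 _]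

lemma designMeasure_toReal_pos (hpt0 : 0 < pt) (hpt1 : pt < 1) (hphp0 : 0 < php)
    (hphp1 : php < 1) {s : Set ((C → Bool) × (Fin N → Bool))} (hs : s.Nonempty) :
    0 < (designMeasure C N pt php s).toReal := by
  obtain ⟨ω, hω⟩ := hs
  refine ENNReal.toReal_pos ?_ (measure_ne_top _ _)
  exact ((designMeasure_singleton_pos hpt0 hpt1 hphp0 hphp1 ω).trans_le
    (measure_mono (Set.singleton_subset_iff.2 hω))).ne'

lemma margProp_pos (hpt0 : 0 < pt) (hpt1 : pt < 1) (hphp0 : 0 < php) (hphp1 : php < 1)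
    (c : Fin N → C) (i : Fin N) (t : Bool) : 0 < margProp pt php c i t :=
  designMeasure_toReal_pos hpt0 hpt1 hphp0 hphp1 ⟨(fun _ => t, fun _ => false), by simp [treat]⟩

lemma jointProp_pos (hpt0 : 0 < pt) (hpt1 : pt < 1) (hphp0 : 0 < php) (hphp1 : php < 1)
    (c : Fin N → C) {i j : Fin N} (hij : i ≠ j) (t1 t2 : Bool) :
    0 < jointProp pt php c i j t1 t2 :=
  designMeasure_toReal_pos hpt0 hpt1 hphp0 hphp1
    ⟨(fun _ => false, fun k => if k = i then t1 else t2), by simp [treat, hij.symm]⟩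

lemma jointProp_self_of_ne (c : Fin N → C) (i : Fin N) {t1 t2 : Bool} (ht : t1 ≠ t2) :
    jointProp pt php c i i t1 t2 = 0 := by
  have : {ω | treat c i ω = t1 ∧ treat c i ω = t2} = ∅ :=
    Set.eq_empty_of_forall_notMem fun ω ⟨h1, h2⟩ => ht (h1.symm.trans h2)
  simp [jointProp, this]

lemma iIndepFun_designMeasure (hpt0 : 0 ≤ pt) (hpt1 : pt ≤ 1) (hphp0 : 0 ≤ php)
    (hphp1 : php ≤ 1) :
    iIndepFun (fun (x : C ⊕ Fin N) (ω : (C → Bool) × (Fin N → Bool)) =>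
      Sum.elim ω.1 ω.2 x) (designMeasure C N pt php) := by
  have := isProbabilityMeasure_bernoulliMeasure hpt0 hpt1
  have := isProbabilityMeasure_bernoulliMeasure hphp0 hphp1
  have := isProbabilityMeasure_designMeasure hpt0 hpt1 hphp0 hphp1 (C := C) (N := N)
  let μ : C ⊕ Fin N → Measure Bool :=
    Sum.elim (fun _ => bernoulliMeasure pt) (fun _ => bernoulliMeasure php)
  have : ∀ x, IsProbabilityMeasure (μ x) := by rintro (x | x) <;> assumption
  have hsum := measurePreserving_sumPiEquivProdPi_symm (X := fun _ => Bool) μ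
  rw [iIndepFun_iff_map_fun_eq_pi_map fun _ => Measurable.of_discrete.aemeasurable]
  have hmap : (designMeasure C N pt php).map (fun ω x => Sum.elim ω.1 ω.2 x) = Measure.pi μ :=
    hsum.map_eq
  rw [hmap]
  congr 1
  funext x
  exact ((measurePreserving_eval μ x).comp hsum).map_eq.symm

lemma indepFun_treat_of_cluster_ne (hpt0 : 0 ≤ pt) (hpt1 : pt ≤ 1) (hphp0 : 0 ≤ php)
    (hphp1 : php ≤ 1) (c : Fin N → C) {i j : Fin N} (hc : c i ≠ c j) :
    IndepFun (treat c i) (treat c j) (designMeasure C N pt php) := by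
  have hij : i ≠ j := fun h => hc (congrArg c h)
  have hxor : Measurable fun b : Bool × Bool => xor b.1 b.2 := .of_discrete
  exact ((iIndepFun_designMeasure hpt0 hpt1 hphp0 hphp1).indepFun_prodMk_prodMk
    (fun _ => .of_discrete) (.inl (c i)) (.inr i) (.inl (c j)) (.inr j) (by simpa) (by simp)
    (by simp) (by simpa)).comp hxor hxor

lemma jointProp_eq_mul_of_cluster_ne (hpt0 : 0 ≤ pt) (hpt1 : pt ≤ 1) (hphp0 : 0 ≤ php)
    (hphp1 : php ≤ 1) (c : Fin N → C) {i j : Fin N} (hc : c i ≠ c j) (t1 t2 : Bool) :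
    jointProp pt php c i j t1 t2 = margProp pt php c i t1 * margProp pt php c j t2 := by
  rw [jointProp, margProp, margProp, ← ENNReal.toReal_mul]
  exact congrArg ENNReal.toReal <|
    (indepFun_treat_of_cluster_ne hpt0 hpt1 hphp0 hphp1 c hc).measure_inter_preimage_eq_mul
      _ _ (.singleton t1) (.singleton t2)

end Design

lemma integral_ite_zero {Ω : Type*} [MeasurableSpace Ω] [DiscreteMeasurableSpace Ω]
    (μ : Measure Ω) (P : Ω → Prop) [DecidablePred P] (a : ℝ) :
    ∫ ω, (if P ω then a else 0) ∂μ = (μ {ω | P ω}).toReal * a := by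
  simpa [Set.indicator_apply, measureReal_def] using
    integral_indicator_const (μ := μ) a (MeasurableSet.of_discrete (s := {ω | P ω}))

section Estimators

variable {C : Type*} [Fintype C] {N : ℕ} {pt php : ℝ} (c : Fin N → C)
  (Y : Fin N → Bool → ℝ)

lemma integral_htEst {t : Bool} (hm : ∀ i, margProp pt php c i t ≠ 0) :
    ∫ ω, htEst pt php c Y t ω ∂designMeasure C N pt php = 1 / N * ∑ i, Y i t := by
  unfold htEst
  rw [integral_const_mul, integral_finsetSum _ fun _ _ => Integrable.of_finite]
  congr 1
  refine Finset.sum_congr rfl fun i _ => ?_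
  rw [integral_ite_zero]
  exact mul_div_cancel₀ _ (hm i)

lemma integral_htEst_mul (t1 t2 : Bool) :
    ∫ ω, htEst pt php c Y t1 ω * htEst pt php c Y t2 ω ∂designMeasure C N pt php
      = (1 / N) ^ 2 * ∑ i, ∑ j, jointProp pt php c i j t1 t2 *
          (Y i t1 / margProp pt php c i t1 * (Y j t2 / margProp pt php c j t2)) := by
  simp only [htEst, mul_mul_mul_comm, ← sq, Finset.sum_mul_sum, ite_zero_mul_ite_zero]
  rw [integral_const_mul, integral_finsetSum _ fun _ _ => Integrable.of_finite]
  congr 1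
  refine Finset.sum_congr rfl fun i _ => ?_
  rw [integral_finsetSum _ fun _ _ => Integrable.of_finite]
  exact Finset.sum_congr rfl fun j _ => integral_ite_zero _ _ _

lemma cov_htEst [IsProbabilityMeasure (designMeasure C N pt php)] {t1 t2 : Bool}
    (hm1 : ∀ i, margProp pt php c i t1 ≠ 0) (hm2 : ∀ i, margProp pt php c i t2 ≠ 0) :
    cov (designMeasure C N pt php) (htEst pt php c Y t1) (htEst pt php c Y t2)
      = (1 / N) ^ 2 * ∑ i, ∑ j, (jointProp pt php c i j t1 t2 /
          (margProp pt php c i t1 * margProp pt php c j t2) - 1) * (Y i t1 * Y j t2) := by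
  change covariance _ _ _ = _
  rw [covariance_eq_sub MemLp.of_discrete MemLp.of_discrete]
  simp only [Pi.mul_apply]
  rw [integral_htEst_mul, integral_htEst c Y hm1, integral_htEst c Y hm2,
    mul_mul_mul_comm, ← sq, Finset.sum_mul_sum, ← mul_sub, ← Finset.sum_sub_distrib]
  congr 1
  refine Finset.sum_congr rfl fun i _ => ?_
  rw [← Finset.sum_sub_distrib]
  refine Finset.sum_congr rfl fun j _ => ?_
  ring

lemma integral_Qhat (t : Bool) :
    ∫ ω, Qhat c Y t ω ∂designMeasure C N pt php
      = ∑ i, margProp pt php c i t * Y i t ^ 2 := by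
  simp only [Qhat, Finset.sum_filter]
  rw [integral_finsetSum _ fun _ _ => Integrable.of_finite]
  exact Finset.sum_congr rfl fun i _ => integral_ite_zero _ _ _

variable [DecidableEq C]

lemma sum_Shat_eq (t1 t2 : Bool) (ω : (C → Bool) × (Fin N → Bool)) :
    ∑ k, Shat c Y t1 t2 k ω = ∑ i, ∑ j,
      if c i = c j ∧ treat c i ω = t1 ∧ treat c j ω = t2 then Y i t1 * Y j t2 else 0 := by
  simp only [Shat, Finset.sum_filter, ite_and]
  rw [Finset.sum_comm]
  refine Finset.sum_congr rfl fun i _ => ?_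
  simp only [Finset.sum_ite_eq, Finset.mem_univ, if_true]
  by_cases h : treat c i ω = t1 <;> simp [h, eq_comm]

lemma integral_sum_Shat (t1 t2 : Bool) :
    ∫ ω, ∑ k, Shat c Y t1 t2 k ω ∂designMeasure C N pt php = ∑ i, ∑ j,
      if c i = c j then jointProp pt php c i j t1 t2 * (Y i t1 * Y j t2) else 0 := by
  simp only [sum_Shat_eq]
  rw [integral_finsetSum _ fun _ _ => Integrable.of_finite]
  refine Finset.sum_congr rfl fun i _ => ?_
  rw [integral_finsetSum _ fun _ _ => Integrable.of_finite]
  refine Finset.sum_congr rfl fun j _ => ?_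
  by_cases hc : c i = c j
  · simp only [hc, true_and, if_true]
    exact integral_ite_zero _ _ _
  · simp [hc]

lemma integral_covHat (p : Bool → ℝ) (pj : Bool → Bool → ℝ) (t1 t2 : Bool) :
    ∫ ω, covHat c Y p pj t1 t2 ω ∂designMeasure C N pt php
      = 1 / N ^ 2 * (∑ i, ∑ j, (if c i = c j then
            (1 / (p t1 * p t2) - 1 / pj t1 t2) * jointProp pt php c i j t1 t2 else 0)
              * (Y i t1 * Y j t2)
          - ∑ i, margProp pt php c i t1 * Y i t1 ^ 2 / (2 * p t1)
          - ∑ i, margProp pt php c i t2 * Y i t2 ^ 2 / (2 * p t2)) := by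
  unfold covHat
  rw [integral_const_mul, integral_sub Integrable.of_finite Integrable.of_finite,
    integral_sub Integrable.of_finite Integrable.of_finite, integral_const_mul, integral_div,
    integral_div, integral_sum_Shat, integral_Qhat, integral_Qhat, Finset.sum_div,
    Finset.sum_div, Finset.mul_sum]
  congr 3
  refine Finset.sum_congr rfl fun i _ => ?_
  rw [Finset.mul_sum]
  refine Finset.sum_congr rfl fun j _ => ?_
  split_ifs <;> ring

lemma covHat_coeff_eq (hpt0 : 0 < pt) (hpt1 : pt < 1) (hphp0 : 0 < php) (hphp1 : php < 1)
    {t1 t2 : Bool} (ht : t1 ≠ t2) {p1 p2 q : ℝ} (hp1 : ∀ i, margProp pt php c i t1 = p1)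
    (hp2 : ∀ j, margProp pt php c j t2 = p2)
    (hq : ∀ i j, i ≠ j → c i = c j → jointProp pt php c i j t1 t2 = q) (i j : Fin N) :
    (if c i = c j then (1 / (p1 * p2) - 1 / q) * jointProp pt php c i j t1 t2 else 0)
      = jointProp pt php c i j t1 t2 / (margProp pt php c i t1 * margProp pt php c j t2) - 1
        + if i = j then 1 else 0 := by
  have hm1 := margProp_pos hpt0 hpt1 hphp0 hphp1 c i t1
  have hm2 := margProp_pos hpt0 hpt1 hphp0 hphp1 c j t2
  obtain rfl | hij := eq_or_ne i j
  · simp [jointProp_self_of_ne c i ht]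
  by_cases hc : c i = c j
  · have hq_pos := jointProp_pos hpt0 hpt1 hphp0 hphp1 c hij t1 t2
    rw [hq i j hij hc] at hq_pos ⊢
    rw [if_pos hc, if_neg hij, ← hp1 i, ← hp2 j]
    field_simp
    ring
  · rw [if_neg hc, if_neg hij,
      jointProp_eq_mul_of_cluster_ne hpt0.le hpt1.le hphp0.le hphp1.le c hc,
      div_self (by positivity)]
    ring

end Estimators

theorem covariance_estimator_downward_biased_general
    {C : Type*} [Fintype C] [DecidableEq C] {N : ℕ}
    (pt php : ℝ) (hpt0 : 0 < pt) (hpt1 : pt < 1) (hphp0 : 0 < php) (hphp1 : php < 1)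
    (c : Fin N → C) (Y : Fin N → Bool → ℝ)
    (p : Bool → ℝ) (hp : ∀ (i : Fin N) (t : Bool), margProp pt php c i t = p t)
    (pj : Bool → Bool → ℝ)
    (hpj : ∀ (i j : Fin N) (t1 t2 : Bool), i ≠ j → c i = c j →
      jointProp pt php c i j t1 t2 = pj t1 t2)
    (t1 t2 : Bool) (ht : t1 ≠ t2) :
    ∫ ω, covHat c Y p pj t1 t2 ω ∂(designMeasure C N pt php)
      ≤ cov (designMeasure C N pt php) (htEst pt php c Y t1) (htEst pt php c Y t2) := by
  have := isProbabilityMeasure_designMeasure hpt0.le hpt1.le hphp0.le hphp1.le (C := C) (N := N)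
  have hm := margProp_pos hpt0 hpt1 hphp0 hphp1 c
  have hQ (i : Fin N) (t : Bool) :
      margProp pt php c i t * Y i t ^ 2 / (2 * p t) = Y i t ^ 2 / 2 := by
    rw [← hp i t]
    field_simp [(hm i t).ne']
  have hdiag : ∑ i, Y i t1 * Y i t2 ≤ ∑ i, Y i t1 ^ 2 / 2 + ∑ i, Y i t2 ^ 2 / 2 := by
    rw [← Finset.sum_add_distrib]
    exact Finset.sum_le_sum fun i _ => by linarith [two_mul_le_add_sq (Y i t1) (Y i t2)]
  rw [integral_covHat, cov_htEst c Y (fun i => (hm i t1).ne') (fun i => (hm i t2).ne')]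
  simp only [covHat_coeff_eq c hpt0 hpt1 hphp0 hphp1 ht (hp · t1) (hp · t2)
    (fun i j => hpj i j t1 t2), hQ]
  simp only [add_mul, Finset.sum_add_distrib, ite_mul, one_mul, zero_mul, Finset.sum_ite_eq,
    Finset.mem_univ, if_true, one_div_pow]
  exact mul_le_mul_of_nonneg_left (by linarith) (by positivity)

/-- Under the hole-punching graph-cluster randomization design with `0 < p_t < 1` and
`0 < p_hp < 1`, if all potential outcomes are non-negative then, for `t1 ≠ t2`, the
cluster-form covariance estimator is downward biased:
`E[Ĉov[μ̂(t1), μ̂(t2)]] ≤ Cov[μ̂(t1), μ̂(t2)]`. -/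
theorem covariance_estimator_downward_biased
    {C : Type*} [Fintype C] [DecidableEq C] {N : ℕ} (hN : 1 ≤ N)
    (pt php : ℝ) (hpt0 : 0 < pt) (hpt1 : pt < 1) (hphp0 : 0 < php) (hphp1 : php < 1)
    (c : Fin N → C) (Y : Fin N → Bool → ℝ) (hY : ∀ (i : Fin N) (t : Bool), 0 ≤ Y i t)
    (p : Bool → ℝ) (hp : ∀ (i : Fin N) (t : Bool), margProp pt php c i t = p t)
    (pj : Bool → Bool → ℝ)
    (hpj : ∀ (i j : Fin N) (t1 t2 : Bool), i ≠ j → c i = c j →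
      jointProp pt php c i j t1 t2 = pj t1 t2)
    (t1 t2 : Bool) (ht : t1 ≠ t2) :
    ∫ ω, covHat c Y p pj t1 t2 ω ∂(designMeasure C N pt php)
      ≤ cov (designMeasure C N pt php) (htEst pt php c Y t1) (htEst pt php c Y t2) :=
  covariance_estimator_downward_biased_general pt php hpt0 hpt1 hphp0 hphp1 c Y p hp pj hpj t1 t2 ht
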